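/- arXiv:1506.06402 — 2 statements merged into one kernel-verified Lean document; each statement's English description precedes it below -/
import Mathlib

section
/- For a Fock-space construction F with natural transformation η_A : A → FA, Δ̄_A ∘ a⁺ = ((a⁺ ⊗ id_{FA}) + (id_{FA} ⊗ a⁺) ∘ (σ_{A,FA} ⊗ id_{FA})) ∘ (id_A ⊗ Δ̄_A) : A ⊗ FA → FA ⊗ FA, where a⁺ = ∇̄_A ∘ (η_A ⊗ id_{FA}). -/
open CategoryTheory CategoryTheory.Limits CategoryTheory.MonoidalCategory ZeroObject

universe v u

variable (C : Type u) [Category.{v} C] [HasZeroObject C] [HasZeroMorphisms C]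
  [HasBinaryBiproducts C] [MonoidalCategory C] [SymmetricCategory C]

/-- The diagonal `Δ_A = ⟨id, id⟩ : A ⟶ A ⊞ A`. -/
noncomputable abbrev bdiag (A : C) : A ⟶ A ⊞ A := biprod.lift (𝟙 A) (𝟙 A)

/-- The codiagonal `∇_A = [id, id] : A ⊞ A ⟶ A`. -/
noncomputable abbrev bcodiag (A : C) : A ⊞ A ⟶ A := biprod.desc (𝟙 A) (𝟙 A)

variable {C}

/-- Convolution addition of morphisms induced by the biproduct structure:
`f + g = ∇_B ∘ (f ⊞ g) ∘ Δ_A`. -/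
noncomputable def cadd {A B : C} (f g : A ⟶ B) : A ⟶ B :=
  bdiag C A ≫ biprod.map f g ≫ bcodiag C B

variable (C)

/-- Compatibility of the biproduct structure and the symmetric monoidal
structure: the tensor product is bilinear for the biproduct (convolution)
enrichment.  A category carrying both compatible structures is a category of
spaces and linear maps. -/
class TensorCompatible : Prop where
  zero_tensorHom : ∀ {A B X Y : C} (f : X ⟶ Y), (0 : A ⟶ B) ⊗ₘ f = 0
  tensorHom_zero : ∀ {A B X Y : C} (f : X ⟶ Y), f ⊗ₘ (0 : A ⟶ B) = 0
  cadd_tensorHom : ∀ {A B X Y : C} (f g : A ⟶ B) (h : X ⟶ Y),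
    cadd f g ⊗ₘ h = cadd (f ⊗ₘ h) (g ⊗ₘ h)
  tensorHom_cadd : ∀ {A B X Y : C} (f g : A ⟶ B) (h : X ⟶ Y),
    h ⊗ₘ cadd f g = cadd (h ⊗ₘ f) (h ⊗ₘ g)

/-- A (bosonic) Fock-space construction on a category of spaces and linear
maps: a strong symmetric monoidal functor from the biproduct monoidal
structure `(0, ⊞)` to the symmetric monoidal structure `(𝟙_ C, ⊗)`. -/
structure FockConstruction where
  /-- The underlying functor. -/
  F : C ⥤ C
  /-- The unit comparison isomorphism `I ≅ F 0`. -/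
  φ₀ : 𝟙_ C ≅ F.obj (0 : C)
  /-- The tensor comparison isomorphism `F A ⊗ F B ≅ F (A ⊞ B)`. -/
  φ : ∀ A B : C, F.obj A ⊗ F.obj B ≅ F.obj (A ⊞ B)
  φ_natural : ∀ {A B A' B' : C} (f : A ⟶ A') (g : B ⟶ B'),
    (F.map f ⊗ₘ F.map g) ≫ (φ A' B').hom = (φ A B).hom ≫ F.map (biprod.map f g)
  left_unitality : ∀ A : C,
    (φ₀.hom ⊗ₘ 𝟙 (F.obj A)) ≫ (φ 0 A).hom ≫ F.map (biprod.desc 0 (𝟙 A)) =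
      (λ_ (F.obj A)).hom
  right_unitality : ∀ A : C,
    (𝟙 (F.obj A) ⊗ₘ φ₀.hom) ≫ (φ A 0).hom ≫ F.map (biprod.desc (𝟙 A) 0) =
      (ρ_ (F.obj A)).hom
  associativity : ∀ A B D : C,
    ((φ A B).hom ⊗ₘ 𝟙 (F.obj D)) ≫ (φ (A ⊞ B) D).hom ≫
        F.map (biprod.associator A B D).hom =
      (α_ (F.obj A) (F.obj B) (F.obj D)).hom ≫
        (𝟙 (F.obj A) ⊗ₘ (φ B D).hom) ≫ (φ A (B ⊞ D)).hom
  braided : ∀ A B : C,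
    (φ A B).hom ≫ F.map (biprod.braiding A B).hom =
      (β_ (F.obj A) (F.obj B)).hom ≫ (φ B A).hom

namespace FockConstruction

variable {C} (Φ : FockConstruction C)

/-- The unit `η̄_A : I ⟶ F A` of the Fock bialgebra. -/
noncomputable def unit (A : C) : 𝟙_ C ⟶ Φ.F.obj A :=
  Φ.φ₀.hom ≫ Φ.F.map (0 : (0 : C) ⟶ A)

/-- The multiplication `∇̄_A : F A ⊗ F A ⟶ F A` of the Fock bialgebra. -/
noncomputable def mult (A : C) : Φ.F.obj A ⊗ Φ.F.obj A ⟶ Φ.F.obj A :=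
  (Φ.φ A A).hom ≫ Φ.F.map (bcodiag C A)

/-- The counit `ε̄_A : F A ⟶ I` of the Fock bialgebra. -/
noncomputable def counit (A : C) : Φ.F.obj A ⟶ 𝟙_ C :=
  Φ.F.map (0 : A ⟶ (0 : C)) ≫ Φ.φ₀.inv

/-- The comultiplication `Δ̄_A : F A ⟶ F A ⊗ F A` of the Fock bialgebra. -/
noncomputable def comult (A : C) : Φ.F.obj A ⟶ Φ.F.obj A ⊗ Φ.F.obj A :=
  Φ.F.map (bdiag C A) ≫ (Φ.φ A A).inv

/-- The creation operator `a⁺ = ∇̄_A ∘ (η_A ⊗ id) : A ⊗ F A ⟶ F A` associated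
to a natural transformation `η : Id ⟶ F`. -/
noncomputable def creation (η : 𝟭 C ⟶ Φ.F) (A : C) : A ⊗ Φ.F.obj A ⟶ Φ.F.obj A :=
  (η.app A ⊗ₘ 𝟙 (Φ.F.obj A)) ≫ Φ.mult A

/-- The annihilation operator `a⁻ = (ε_A ⊗ id) ∘ Δ̄_A : F A ⟶ A ⊗ F A`
associated to a natural transformation `ε : F ⟶ Id`. -/
noncomputable def annihilation (ε : Φ.F ⟶ 𝟭 C) (A : C) :
    Φ.F.obj A ⟶ A ⊗ Φ.F.obj A :=
  Φ.comult A ≫ (ε.app A ⊗ₘ 𝟙 (Φ.F.obj A))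

end FockConstruction

/-!
The comultiplication `Δ̄ = φ⁻¹ ∘ F Δ` is a morphism of algebras for `∇̄ = F ∇ ∘ φ`: in the
biproduct structure `Δ ∘ ∇ = (∇ ⊞ ∇) ∘ interchange ∘ (Δ ⊞ Δ)`, and the strong monoidal functor
`F` carries the biproduct interchange to the tensor interchange `tensorμ`. Moreover `η_A` is
primitive, `Δ̄ ∘ η_A = η_A ⊗ 1 + 1 ⊗ η_A`, because `Δ = inl + inr` and `F inl`, `F inr` insert
the unit `η̄`. Hence `Δ̄ ∘ a⁺ = Δ̄ ∘ ∇̄ ∘ (η_A ⊗ id)` splits, by bilinearity of `⊗`, into two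
terms, in each of which one factor is multiplied by the unit and drops out.
-/

section Biproducts

variable {C : Type u} [Category.{v} C] [HasZeroMorphisms C] [HasBinaryBiproducts C]

theorem cadd_comp {A B D : C} (f g : A ⟶ B) (h : B ⟶ D) :
    cadd f g ≫ h = cadd (f ≫ h) (g ≫ h) := by
  have : biprod.map f g ≫ bcodiag C B ≫ h = biprod.map (f ≫ h) (g ≫ h) ≫ bcodiag C D := by
    ext <;> simp
  simp only [cadd, Category.assoc, this]

theorem comp_cadd {A B D : C} (h : A ⟶ B) (f g : B ⟶ D) :
    h ≫ cadd f g = cadd (h ≫ f) (h ≫ g) := by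
  have : h ≫ bdiag C B ≫ biprod.map f g = bdiag C A ≫ biprod.map (h ≫ f) (h ≫ g) := by
    ext <;> simp
  simp only [cadd, ← Category.assoc, this]

theorem bdiag_eq_cadd (A : C) : bdiag C A = cadd biprod.inl biprod.inr := by
  have : biprod.map biprod.inl biprod.inr ≫ bcodiag C (A ⊞ A) = 𝟙 (A ⊞ A) := by ext <;> simp
  rw [cadd, this, Category.comp_id]

/-- Built from associators and the braiding exactly as `tensorμ` is, so that `φ` can be pushed
through it factor by factor. -/
noncomputable def biprodInterchange (X₁ X₂ Y₁ Y₂ : C) :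
    (X₁ ⊞ X₂) ⊞ (Y₁ ⊞ Y₂) ⟶ (X₁ ⊞ Y₁) ⊞ (X₂ ⊞ Y₂) :=
  (biprod.associator X₁ X₂ (Y₁ ⊞ Y₂)).hom ≫
    biprod.map (𝟙 X₁) ((biprod.associator X₂ Y₁ Y₂).inv ≫
      biprod.map (biprod.braiding X₂ Y₁).hom (𝟙 Y₂) ≫ (biprod.associator Y₁ X₂ Y₂).hom) ≫
    (biprod.associator X₁ Y₁ (X₂ ⊞ Y₂)).inv

theorem biprodInterchange_eq_lift (X₁ X₂ Y₁ Y₂ : C) :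
    biprodInterchange X₁ X₂ Y₁ Y₂ =
      biprod.lift (biprod.map biprod.fst biprod.fst) (biprod.map biprod.snd biprod.snd) := by
  apply biprod.hom_ext <;> apply biprod.hom_ext <;> apply biprod.hom_ext' <;>
    apply biprod.hom_ext' <;> simp [biprodInterchange, biprod.associator, biprod.braiding]

theorem bcodiag_comp_bdiag (A : C) :
    bcodiag C A ≫ bdiag C A =
      biprod.map (bdiag C A) (bdiag C A) ≫ biprodInterchange A A A A ≫
        biprod.map (bcodiag C A) (bcodiag C A) := by
  rw [biprodInterchange_eq_lift]
  apply biprod.hom_ext' <;> apply biprod.hom_ext <;> simp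

theorem biprod_map_id_zero [HasZeroObject C] (A B : C) :
    biprod.map (𝟙 A) (0 : (0 : C) ⟶ B) = biprod.desc (𝟙 A) 0 ≫ biprod.inl := by
  ext <;> simp

theorem biprod_map_zero_id [HasZeroObject C] (A B : C) :
    biprod.map (0 : (0 : C) ⟶ B) (𝟙 A) = biprod.desc 0 (𝟙 A) ≫ biprod.inr := by
  ext <;> simp

end Biproducts

section Braided

variable {C : Type u} [Category.{v} C] [MonoidalCategory C] [BraidedCategory C]

theorem rightUnitor_inv_tensorμ_leftUnitor (A X Y : C) :
    ((ρ_ A).inv ▷ (X ⊗ Y)) ≫ tensorμ A (𝟙_ C) X Y ≫ ((A ⊗ X) ◁ (λ_ Y).hom) =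
      (α_ A X Y).inv := by
  simp only [tensorμ, braiding_tensorUnit_left]
  monoidal

theorem leftUnitor_inv_tensorμ_leftUnitor (A X Y : C) :
    ((λ_ A).inv ▷ (X ⊗ Y)) ≫ tensorμ (𝟙_ C) A X Y ≫ ((λ_ X).hom ▷ (A ⊗ Y)) =
      (α_ A X Y).inv ≫ ((β_ A X).hom ▷ Y) ≫ (α_ X A Y).hom := by
  simp only [tensorμ]
  monoidal

end Braided

theorem cadd_whiskerRight {C : Type u} [Category.{v} C] [HasZeroMorphisms C]
    [HasBinaryBiproducts C] [MonoidalCategory C] [TensorCompatible C] {A B : C} (f g : A ⟶ B)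
    (X : C) : cadd f g ▷ X = cadd (f ▷ X) (g ▷ X) := by
  simpa only [tensorHom_id] using TensorCompatible.cadd_tensorHom f g (𝟙 X)

namespace FockConstruction

variable {C : Type u} [Category.{v} C] [HasZeroObject C] [HasZeroMorphisms C]
  [HasBinaryBiproducts C] [MonoidalCategory C] [SymmetricCategory C] (Φ : FockConstruction C)

theorem tensor_unit_comp_φ_hom (A B : C) :
    (𝟙 (Φ.F.obj A) ⊗ₘ Φ.unit B) ≫ (Φ.φ A B).hom =
      (ρ_ (Φ.F.obj A)).hom ≫ Φ.F.map biprod.inl := by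
  have hnat := Φ.φ_natural (𝟙 A) (0 : (0 : C) ⟶ B)
  rw [Φ.F.map_id, biprod_map_id_zero, Φ.F.map_comp] at hnat
  rw [unit, id_tensor_comp, Category.assoc, hnat, ← Φ.right_unitality A]
  simp only [Category.assoc]

theorem unit_tensor_comp_φ_hom (A B : C) :
    (Φ.unit B ⊗ₘ 𝟙 (Φ.F.obj A)) ≫ (Φ.φ B A).hom =
      (λ_ (Φ.F.obj A)).hom ≫ Φ.F.map biprod.inr := by
  have hnat := Φ.φ_natural (0 : (0 : C) ⟶ B) (𝟙 A)
  rw [Φ.F.map_id, biprod_map_zero_id, Φ.F.map_comp] at hnat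
  rw [unit, comp_tensor_id, Category.assoc, hnat, ← Φ.left_unitality A]
  simp only [Category.assoc]

theorem map_inl_comp_φ_inv (A B : C) :
    Φ.F.map biprod.inl ≫ (Φ.φ A B).inv =
      (ρ_ (Φ.F.obj A)).inv ≫ (𝟙 (Φ.F.obj A) ⊗ₘ Φ.unit B) := by
  rw [Iso.comp_inv_eq, Category.assoc, tensor_unit_comp_φ_hom, Iso.inv_hom_id_assoc]

theorem map_inr_comp_φ_inv (A B : C) :
    Φ.F.map biprod.inr ≫ (Φ.φ B A).inv =
      (λ_ (Φ.F.obj A)).inv ≫ (Φ.unit B ⊗ₘ 𝟙 (Φ.F.obj A)) := by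
  rw [Iso.comp_inv_eq, Category.assoc, unit_tensor_comp_φ_hom, Iso.inv_hom_id_assoc]

theorem unit_mult (A : C) : (Φ.unit A ▷ Φ.F.obj A) ≫ Φ.mult A = (λ_ (Φ.F.obj A)).hom := by
  rw [mult, ← tensorHom_id, reassoc_of% Φ.unit_tensor_comp_φ_hom, ← Φ.F.map_comp,
    biprod.inr_desc, Φ.F.map_id, Category.comp_id]

theorem app_comp_comult (η : 𝟭 C ⟶ Φ.F) (A : C) :
    η.app A ≫ Φ.comult A =
      cadd ((ρ_ A).inv ≫ (η.app A ⊗ₘ Φ.unit A)) ((λ_ A).inv ≫ (Φ.unit A ⊗ₘ η.app A)) := by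
  have hnat {X Y Z : C} (f : X ⟶ Y) (h : Φ.F.obj Y ⟶ Z) :
      f ≫ η.app Y ≫ h = η.app X ≫ Φ.F.map f ≫ h :=
    η.naturality_assoc f h
  calc η.app A ≫ Φ.comult A = bdiag C A ≫ η.app (A ⊞ A) ≫ (Φ.φ A A).inv := (hnat _ _).symm
    _ = cadd (η.app A ≫ Φ.F.map biprod.inl ≫ (Φ.φ A A).inv)
          (η.app A ≫ Φ.F.map biprod.inr ≫ (Φ.φ A A).inv) := by
        rw [bdiag_eq_cadd, cadd_comp, hnat, hnat]
    _ = _ := by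
        rw [map_inl_comp_φ_inv, map_inr_comp_φ_inv, rightUnitor_inv_naturality_assoc,
          leftUnitor_inv_naturality_assoc, id_tensorHom, tensorHom_id,
          ← MonoidalCategory.tensorHom_def, ← MonoidalCategory.tensorHom_def']
        rfl

theorem φ_associativity_inv (A B D : C) :
    (Φ.F.obj A ◁ (Φ.φ B D).hom) ≫ (Φ.φ A (B ⊞ D)).hom ≫ Φ.F.map (biprod.associator A B D).inv =
      (α_ (Φ.F.obj A) (Φ.F.obj B) (Φ.F.obj D)).inv ≫ ((Φ.φ A B).hom ▷ Φ.F.obj D) ≫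
        (Φ.φ (A ⊞ B) D).hom := by
  have h := Φ.associativity A B D
  rw [← Iso.inv_comp_eq, id_tensorHom, tensorHom_id] at h
  rw [← reassoc_of% h, ← Φ.F.map_comp, Iso.hom_inv_id, Φ.F.map_id, Category.comp_id]

theorem φ_swap (X Y Z : C) :
    (Φ.F.obj X ◁ (Φ.φ Y Z).hom) ≫ (Φ.φ X (Y ⊞ Z)).hom ≫
        Φ.F.map ((biprod.associator X Y Z).inv ≫ biprod.map (biprod.braiding X Y).hom (𝟙 Z) ≫
          (biprod.associator Y X Z).hom) =
      (α_ _ _ _).inv ≫ ((β_ (Φ.F.obj X) (Φ.F.obj Y)).hom ▷ Φ.F.obj Z) ≫ (α_ _ _ _).hom ≫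
        (Φ.F.obj Y ◁ (Φ.φ X Z).hom) ≫ (Φ.φ Y (X ⊞ Z)).hom := by
  have hnat := Φ.φ_natural (biprod.braiding X Y).hom (𝟙 Z)
  rw [Φ.F.map_id, tensorHom_id] at hnat
  have hassoc := Φ.associativity Y X Z
  rw [id_tensorHom, tensorHom_id] at hassoc
  rw [Φ.F.map_comp, Φ.F.map_comp, reassoc_of% Φ.φ_associativity_inv, ← reassoc_of% hnat,
    ← comp_whiskerRight_assoc, Φ.braided, comp_whiskerRight_assoc, hassoc]

theorem φ_interchange (X₁ X₂ Y₁ Y₂ : C) :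
    ((Φ.φ X₁ X₂).hom ⊗ₘ (Φ.φ Y₁ Y₂).hom) ≫ (Φ.φ (X₁ ⊞ X₂) (Y₁ ⊞ Y₂)).hom ≫
        Φ.F.map (biprodInterchange X₁ X₂ Y₁ Y₂) =
      tensorμ (Φ.F.obj X₁) (Φ.F.obj X₂) (Φ.F.obj Y₁) (Φ.F.obj Y₂) ≫
        ((Φ.φ X₁ Y₁).hom ⊗ₘ (Φ.φ X₂ Y₂).hom) ≫ (Φ.φ (X₁ ⊞ Y₁) (X₂ ⊞ Y₂)).hom := by
  have hassoc := Φ.associativity X₁ X₂ (Y₁ ⊞ Y₂)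
  rw [id_tensorHom, tensorHom_id] at hassoc
  have hnat := Φ.φ_natural (𝟙 X₁) ((biprod.associator X₂ Y₁ Y₂).inv ≫
    biprod.map (biprod.braiding X₂ Y₁).hom (𝟙 Y₂) ≫ (biprod.associator Y₁ X₂ Y₂).hom)
  rw [Φ.F.map_id, id_tensorHom] at hnat
  -- Both sides are α, the swap `φ_swap` whiskered by `F X₁`, and α⁻¹, each moved past the
  -- comparison maps by associativity of `φ`.
  rw [biprodInterchange, Φ.F.map_comp, Φ.F.map_comp, MonoidalCategory.tensorHom_def',
    Category.assoc, reassoc_of% hassoc, ← reassoc_of% hnat, associator_naturality_right_assoc,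
    ← MonoidalCategory.whiskerLeft_comp_assoc, ← MonoidalCategory.whiskerLeft_comp_assoc,
    Category.assoc (_ ◁ (Φ.φ Y₁ Y₂).hom), φ_swap]
  simp only [MonoidalCategory.whiskerLeft_comp, Category.assoc, φ_associativity_inv,
    associator_inv_naturality_right_assoc, tensorμ, MonoidalCategory.tensorHom_def']

theorem mult_comult (A : C) :
    Φ.mult A ≫ Φ.comult A =
      (Φ.comult A ⊗ₘ Φ.comult A) ≫ tensorμ (Φ.F.obj A) (Φ.F.obj A) (Φ.F.obj A) (Φ.F.obj A) ≫
        (Φ.mult A ⊗ₘ Φ.mult A) := by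
  have hcomult : Φ.F.map (bdiag C A) = Φ.comult A ≫ (Φ.φ A A).hom := by simp [comult]
  calc Φ.mult A ≫ Φ.comult A
      = (Φ.φ A A).hom ≫ Φ.F.map (biprod.map (bdiag C A) (bdiag C A)) ≫
          Φ.F.map (biprodInterchange A A A A) ≫
          Φ.F.map (biprod.map (bcodiag C A) (bcodiag C A)) ≫ (Φ.φ A A).inv := by
        simp only [mult, comult, Category.assoc, ← Φ.F.map_comp_assoc, bcodiag_comp_bdiag]
    _ = (Φ.comult A ⊗ₘ Φ.comult A) ≫ ((Φ.φ A A).hom ⊗ₘ (Φ.φ A A).hom) ≫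
          (Φ.φ (A ⊞ A) (A ⊞ A)).hom ≫ Φ.F.map (biprodInterchange A A A A) ≫
          Φ.F.map (biprod.map (bcodiag C A) (bcodiag C A)) ≫ (Φ.φ A A).inv := by
        rw [← reassoc_of% Φ.φ_natural, hcomult, tensorHom_comp_tensorHom_assoc]
    _ = _ := by
        rw [reassoc_of% Φ.φ_interchange, ← reassoc_of% Φ.φ_natural, Iso.hom_inv_id,
          Category.comp_id, tensorHom_comp_tensorHom]
        rfl

theorem mult_tensor_mult_of_tensor_unit {X : C} (A : C) (x : X ⟶ Φ.F.obj A) :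
    (((ρ_ X).inv ≫ (x ⊗ₘ Φ.unit A)) ▷ (Φ.F.obj A ⊗ Φ.F.obj A)) ≫
        tensorμ (Φ.F.obj A) (Φ.F.obj A) (Φ.F.obj A) (Φ.F.obj A) ≫ (Φ.mult A ⊗ₘ Φ.mult A) =
      (α_ X (Φ.F.obj A) (Φ.F.obj A)).inv ≫ ((x ▷ Φ.F.obj A ≫ Φ.mult A) ▷ Φ.F.obj A) := by
  rw [comp_whiskerRight_assoc, tensorμ_natural_left_assoc, tensorHom_comp_tensorHom, Φ.unit_mult,
    MonoidalCategory.tensorHom_def', reassoc_of% rightUnitor_inv_tensorμ_leftUnitor]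

theorem mult_tensor_mult_of_unit_tensor {X : C} (A : C) (x : X ⟶ Φ.F.obj A) :
    (((λ_ X).inv ≫ (Φ.unit A ⊗ₘ x)) ▷ (Φ.F.obj A ⊗ Φ.F.obj A)) ≫
        tensorμ (Φ.F.obj A) (Φ.F.obj A) (Φ.F.obj A) (Φ.F.obj A) ≫ (Φ.mult A ⊗ₘ Φ.mult A) =
      (α_ X (Φ.F.obj A) (Φ.F.obj A)).inv ≫ ((β_ X (Φ.F.obj A)).hom ▷ Φ.F.obj A) ≫
        (α_ (Φ.F.obj A) X (Φ.F.obj A)).hom ≫ (Φ.F.obj A ◁ (x ▷ Φ.F.obj A ≫ Φ.mult A)) := by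
  rw [comp_whiskerRight_assoc, tensorμ_natural_left_assoc, tensorHom_comp_tensorHom, Φ.unit_mult,
    MonoidalCategory.tensorHom_def, reassoc_of% leftUnitor_inv_tensorμ_leftUnitor]

end FockConstruction

/-- For a Fock-space construction with `η : Id ⟶ F`, the comultiplication
interacts with the creation operator by
`Δ̄_A ∘ a⁺ = ((a⁺ ⊗ id) + (id ⊗ a⁺) ∘ (σ_{A,FA} ⊗ id)) ∘ (id_A ⊗ Δ̄_A)`
(associators inserted). -/
theorem FockConstruction.comult_creation {C : Type u} [Category.{v} C]
    [HasZeroObject C] [HasZeroMorphisms C] [HasBinaryBiproducts C]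
    [MonoidalCategory C] [SymmetricCategory C] [TensorCompatible C]
    (Φ : FockConstruction C) (η : 𝟭 C ⟶ Φ.F) (A : C) :
    Φ.creation η A ≫ Φ.comult A =
      (𝟙 A ⊗ₘ Φ.comult A) ≫ (α_ A (Φ.F.obj A) (Φ.F.obj A)).inv ≫
        cadd (Φ.creation η A ⊗ₘ 𝟙 (Φ.F.obj A))
          (((β_ A (Φ.F.obj A)).hom ⊗ₘ 𝟙 (Φ.F.obj A)) ≫
            (α_ (Φ.F.obj A) A (Φ.F.obj A)).hom ≫
            (𝟙 (Φ.F.obj A) ⊗ₘ Φ.creation η A)) := by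
  simp only [creation, tensorHom_id, id_tensorHom]
  rw [Category.assoc, Φ.mult_comult, whiskerRight_comp_tensorHom_assoc, Φ.app_comp_comult,
    MonoidalCategory.tensorHom_def', Category.assoc, cadd_whiskerRight, cadd_comp,
    mult_tensor_mult_of_tensor_unit, mult_tensor_mult_of_unit_tensor, ← comp_cadd]
end

section
/- For a Fock-space construction F on a category of spaces and linear maps equipped with linear exponential comonad structure (ε, δ), the extension v* := Fv ∘ (F0 ≅ FI iso) ∘ δ_0 ∘ (I ≅ F0) : I → FA of a vector v : I → A is a coherent state: ε̄_A ∘ v* = id_I, and Δ̄_A ∘ v* = (v* ⊗ v*) ∘ λ⁻¹_I. -/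
open CategoryTheory CategoryTheory.Limits CategoryTheory.MonoidalCategory ZeroObject

universe v u

variable (C : Type u) [Category.{v} C] [HasZeroObject C] [HasZeroMorphisms C]
  [HasBinaryBiproducts C] [MonoidalCategory C] [SymmetricCategory C]

variable {C}

variable (C)

/-- A linear Fock-space construction: a Fock-space construction equipped with
linear exponential comonad structure `(ε, δ)`. -/
structure LinearFockConstruction extends FockConstruction C where
  /-- The counit `ε_A : F A ⟶ A` of the comonad. -/
  ε : F ⟶ 𝟭 C
  /-- The comultiplication `δ_A : F A ⟶ F (F A)` of the comonad. -/
  δ : F ⟶ F ⋙ F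
  counit_left : ∀ A : C, δ.app A ≫ ε.app (F.obj A) = 𝟙 (F.obj A)
  counit_right : ∀ A : C, δ.app A ≫ F.map (ε.app A) = 𝟙 (F.obj A)
  coassoc : ∀ A : C, δ.app A ≫ δ.app (F.obj A) = δ.app A ≫ F.map (δ.app A)
  -- coherence of `δ` with the strong monoidal structure
  coherence_zero :
    δ.app (0 : C) ≫ F.map (0 : F.obj (0 : C) ⟶ (0 : C)) = 𝟙 (F.obj (0 : C))
  coherence_biprod : ∀ A B : C,
    (δ.app A ⊗ₘ δ.app B) ≫ (φ (F.obj A) (F.obj B)).hom =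
      (φ A B).hom ≫ δ.app (A ⊞ B) ≫
        F.map (biprod.lift (F.map biprod.fst) (F.map biprod.snd))

namespace LinearFockConstruction

variable {C} (Λ : LinearFockConstruction C)

/-- The coherent state extension `v* : I ⟶ F A` of a vector `v : I ⟶ A`:
`I ≅ F 0 → F F 0 ≅ F I → F A`. -/
noncomputable def ext {A : C} (v : 𝟙_ C ⟶ A) : 𝟙_ C ⟶ Λ.F.obj A :=
  Λ.φ₀.hom ≫ Λ.δ.app (0 : C) ≫ Λ.F.map Λ.φ₀.inv ≫ Λ.F.map v

end LinearFockConstruction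

/-! The counit `ε̄` and comultiplication `Δ̄` of the Fock bialgebra are natural, so the
coherent states of `F A` are carried to coherent states of `F B` by any `F f`. Since
`v* = (φ₀ ≫ δ₀) ≫ F (φ₀⁻¹ ≫ v)`, it suffices that `φ₀ ≫ δ₀ : I ⟶ F (F 0)` is coherent, and
this is what the two coherence axioms of `δ` say, once one uses that `0 ⊞ 0` is a zero
object. -/

namespace FockConstruction

variable {C} (Φ : FockConstruction C)

theorem map_comp_counit {A B : C} (f : A ⟶ B) : Φ.F.map f ≫ Φ.counit B = Φ.counit A := by
  rw [counit, ← Φ.F.map_comp_assoc, comp_zero, counit]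

theorem map_comp_comult {A B : C} (f : A ⟶ B) :
    Φ.F.map f ≫ Φ.comult B = Φ.comult A ≫ (Φ.F.map f ⊗ₘ Φ.F.map f) := by
  have hdiag : f ≫ bdiag C B = bdiag C A ≫ biprod.map f f := by ext <;> simp
  have hφ : Φ.F.map (biprod.map f f) ≫ (Φ.φ B B).inv =
      (Φ.φ A A).inv ≫ (Φ.F.map f ⊗ₘ Φ.F.map f) := by
    rw [Iso.eq_inv_comp, ← reassoc_of% (Φ.φ_natural f f), Iso.hom_inv_id, Category.comp_id]
  rw [comult, comult, ← Φ.F.map_comp_assoc, hdiag, Φ.F.map_comp, Category.assoc, hφ,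
    Category.assoc]

theorem tensorHom_comp_φ_comp_map_fst :
    (Φ.φ₀.hom ⊗ₘ Φ.φ₀.hom) ≫ (Φ.φ 0 0).hom ≫ Φ.F.map (biprod.fst : (0 : C) ⊞ 0 ⟶ 0) =
      (λ_ (𝟙_ C)).hom ≫ Φ.φ₀.hom := by
  have hfst : (biprod.fst : (0 : C) ⊞ 0 ⟶ 0) = biprod.desc 0 (𝟙 0) :=
    (isZero_zero C).eq_of_tgt _ _
  have hsplit : Φ.φ₀.hom ⊗ₘ Φ.φ₀.hom = (𝟙 _ ⊗ₘ Φ.φ₀.hom) ≫ (Φ.φ₀.hom ⊗ₘ 𝟙 _) := by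
    rw [tensorHom_comp_tensorHom, Category.id_comp, Category.comp_id]
  rw [hfst, hsplit, Category.assoc, Φ.left_unitality, id_tensorHom, leftUnitor_naturality]

theorem map_inl_comp_lift_map_fst_map_snd :
    Φ.F.map (biprod.inl : (0 : C) ⟶ 0 ⊞ 0) ≫
      biprod.lift (Φ.F.map biprod.fst) (Φ.F.map biprod.snd) = bdiag C (Φ.F.obj 0) := by
  have hzero : (0 : (0 : C) ⟶ 0) = 𝟙 0 := (isZero_zero C).eq_of_tgt _ _
  ext
  · rw [biprod.lift_fst, Category.assoc, biprod.lift_fst, ← Φ.F.map_comp, biprod.inl_fst,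
      Φ.F.map_id]
  · rw [biprod.lift_snd, Category.assoc, biprod.lift_snd, ← Φ.F.map_comp, biprod.inl_snd,
      hzero, Φ.F.map_id]

structure IsCoherentState {A : C} (γ : 𝟙_ C ⟶ Φ.F.obj A) : Prop where
  comp_counit : γ ≫ Φ.counit A = 𝟙 (𝟙_ C)
  comp_comult : γ ≫ Φ.comult A = (λ_ (𝟙_ C)).inv ≫ (γ ⊗ₘ γ)

theorem IsCoherentState.comp_map {Φ : FockConstruction C} {A B : C} {γ : 𝟙_ C ⟶ Φ.F.obj A}
    (h : Φ.IsCoherentState γ) (f : A ⟶ B) : Φ.IsCoherentState (γ ≫ Φ.F.map f) where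
  comp_counit := by rw [Category.assoc, map_comp_counit, h.comp_counit]
  comp_comult := by
    rw [Category.assoc, map_comp_comult, reassoc_of% h.comp_comult, tensorHom_comp_tensorHom]

end FockConstruction

namespace LinearFockConstruction

variable {C} (Λ : LinearFockConstruction C)

theorem δ_app_biprod_zero_zero :
    Λ.δ.app ((0 : C) ⊞ 0) = Λ.F.map biprod.fst ≫ Λ.δ.app 0 ≫ Λ.F.map (Λ.F.map biprod.inl) := by
  have hfst_inl : (biprod.fst ≫ biprod.inl : (0 : C) ⊞ 0 ⟶ 0 ⊞ 0) = 𝟙 _ :=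
    biprod.hom_ext _ _ ((isZero_zero C).eq_of_tgt _ _) ((isZero_zero C).eq_of_tgt _ _)
  rw [← Functor.comp_map, ← Λ.δ.naturality, ← Λ.F.map_comp_assoc, hfst_inl, Λ.F.map_id,
    Category.id_comp]

theorem tensorHom_φ₀_comp_δ_comp_φ :
    ((Λ.φ₀.hom ≫ Λ.δ.app 0) ⊗ₘ (Λ.φ₀.hom ≫ Λ.δ.app 0)) ≫ (Λ.φ _ _).hom =
      (λ_ (𝟙_ C)).hom ≫ (Λ.φ₀.hom ≫ Λ.δ.app 0) ≫ Λ.F.map (bdiag C (Λ.F.obj 0)) :=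
  calc _ = (Λ.φ₀.hom ⊗ₘ Λ.φ₀.hom) ≫ (Λ.φ 0 0).hom ≫ Λ.δ.app ((0 : C) ⊞ 0) ≫
          Λ.F.map (biprod.lift (Λ.F.map biprod.fst) (Λ.F.map biprod.snd)) := by
        rw [← tensorHom_comp_tensorHom_assoc, Λ.coherence_biprod]
    _ = ((Λ.φ₀.hom ⊗ₘ Λ.φ₀.hom) ≫ (Λ.φ 0 0).hom ≫ Λ.F.map biprod.fst) ≫ Λ.δ.app 0 ≫
          Λ.F.map (Λ.F.map biprod.inl ≫
            biprod.lift (Λ.F.map biprod.fst) (Λ.F.map biprod.snd)) := by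
        simp only [δ_app_biprod_zero_zero, Functor.map_comp, Category.assoc]
    _ = _ := by
        rw [Λ.tensorHom_comp_φ_comp_map_fst, Λ.map_inl_comp_lift_map_fst_map_snd,
          Category.assoc, Category.assoc]

theorem isCoherentState_φ₀_comp_δ : Λ.IsCoherentState (Λ.φ₀.hom ≫ Λ.δ.app 0) where
  comp_counit := by
    rw [FockConstruction.counit, Category.assoc, reassoc_of% Λ.coherence_zero, Iso.hom_inv_id]
  comp_comult := by
    rw [FockConstruction.comult, Iso.eq_inv_comp,
      (Iso.eq_comp_inv _).mpr Λ.tensorHom_φ₀_comp_δ_comp_φ]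
    simp only [Category.assoc]

theorem ext_eq_φ₀_comp_δ_comp_map {A : C} (v : 𝟙_ C ⟶ A) :
    Λ.ext v = (Λ.φ₀.hom ≫ Λ.δ.app 0) ≫ Λ.F.map (Λ.φ₀.inv ≫ v) := by
  simp only [ext, Functor.map_comp, Category.assoc]

end LinearFockConstruction

theorem LinearFockConstruction.ext_coherent_general {C : Type u} [Category.{v} C]
    [HasZeroObject C] [HasZeroMorphisms C] [HasBinaryBiproducts C]
    [MonoidalCategory C] [SymmetricCategory C]
    (Λ : LinearFockConstruction C) {A : C} (v : 𝟙_ C ⟶ A) :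
    Λ.ext v ≫ Λ.toFockConstruction.counit A = 𝟙 (𝟙_ C) ∧
    Λ.ext v ≫ Λ.toFockConstruction.comult A =
      (λ_ (𝟙_ C)).inv ≫ (Λ.ext v ⊗ₘ Λ.ext v) := by
  have h := Λ.isCoherentState_φ₀_comp_δ.comp_map (Λ.φ₀.inv ≫ v)
  rw [← Λ.ext_eq_φ₀_comp_δ_comp_map] at h
  exact ⟨h.comp_counit, h.comp_comult⟩

/-- For a linear Fock-space construction, the extension `v*` of any vector
`v : I ⟶ A` is a coherent state: `ε̄_A ∘ v* = id_I` and
`Δ̄_A ∘ v* = (v* ⊗ v*) ∘ λ⁻¹_I`. -/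
theorem LinearFockConstruction.ext_coherent {C : Type u} [Category.{v} C]
    [HasZeroObject C] [HasZeroMorphisms C] [HasBinaryBiproducts C]
    [MonoidalCategory C] [SymmetricCategory C] [TensorCompatible C]
    (Λ : LinearFockConstruction C) {A : C} (v : 𝟙_ C ⟶ A) :
    Λ.ext v ≫ Λ.toFockConstruction.counit A = 𝟙 (𝟙_ C) ∧
    Λ.ext v ≫ Λ.toFockConstruction.comult A =
      (λ_ (𝟙_ C)).inv ≫ (Λ.ext v ⊗ₘ Λ.ext v) :=
  LinearFockConstruction.ext_coherent_general Λ v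
end
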